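/- Let a, b, c : ℝⁿ → ℝ be continuous with c(x) > 0 and let Φ : [0,T] × ℝⁿ → ℝ be continuous. Let u ∈ C²([0,T] × ℝⁿ) be such that there is a compact set K ⊂ ℝⁿ with u(t,x) = 0 for all t ∈ [0,T] and x ∉ K, and suppose u satisfies ∂ₜ²u − c²Δu + a∂ₜu + bu + (Φ ⋆ ∂ₜu) = 0 pointwise on (0,T) × ℝⁿ. Define the energy E(t) = ∫_{ℝⁿ} ( |∇ₓu(t,x)|² + c(x)⁻² b(x) |u(t,x)|² + c(x)⁻² |∂ₜu(t,x)|² ) dx. Then E is differentiable on (0,T) and for every t ∈ (0,T), E′(t) = −2 ∫_{ℝⁿ} a(x) c(x)⁻² |∂ₜu(t,x)|² dx − 2 ∫_{ℝⁿ} c(x)⁻² (Φ ⋆ ∂ₜu)(t,x) ∂ₜu(t,x) dx. -/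

import Mathlib

open MeasureTheory Set

/-- Partial derivative in the `i`-th coordinate direction. -/
noncomputable def pd {n : ℕ} (i : Fin n) (f : EuclideanSpace ℝ (Fin n) → ℝ)
    (x : EuclideanSpace ℝ (Fin n)) : ℝ :=
  fderiv ℝ f x (EuclideanSpace.single i 1)

/-- Laplacian in the spatial variable. -/
noncomputable def lap {n : ℕ} (f : EuclideanSpace ℝ (Fin n) → ℝ)
    (x : EuclideanSpace ℝ (Fin n)) : ℝ :=
  ∑ i : Fin n, pd i (fun y => pd i f y) x

/-- First time derivative `∂ₜu`. -/
noncomputable def dt1 {n : ℕ} (u : ℝ → EuclideanSpace ℝ (Fin n) → ℝ) (t : ℝ)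
    (x : EuclideanSpace ℝ (Fin n)) : ℝ :=
  deriv (fun s => u s x) t

/-- Second time derivative `∂ₜ²u`. -/
noncomputable def dt2 {n : ℕ} (u : ℝ → EuclideanSpace ℝ (Fin n) → ℝ) (t : ℝ)
    (x : EuclideanSpace ℝ (Fin n)) : ℝ :=
  deriv (fun s => dt1 u s x) t

/-- Time convolution `(Φ ⋆ w)(t,x) = ∫₀ᵗ Φ(t−s,x) w(s,x) ds`. -/
noncomputable def tconv {n : ℕ} (Φ : ℝ → EuclideanSpace ℝ (Fin n) → ℝ)
    (w : ℝ → EuclideanSpace ℝ (Fin n) → ℝ) (t : ℝ) (x : EuclideanSpace ℝ (Fin n)) : ℝ :=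
  ∫ s in (0:ℝ)..t, Φ (t - s) x * w s x

/-!
Differentiate under the integral sign: for times in a compact subinterval of `(0,T)` the time
derivative of the energy density is jointly continuous and vanishes outside `K`, hence is dominated
by a multiple of the indicator of `K`. By the symmetry of mixed partials, the time derivative of
`|∇ₓu|²` is `2 ∇ₓu · ∇ₓ∂ₜu`. Substituting the equation for `c⁻² ∂ₜ²u`, the terms
`∇ₓu · ∇ₓ∂ₜu + ∂ₜu Δu` integrate to zero by Green's identity, since `∂ₜu(t,·)` has compact
support, and only the damping and memory terms remain.
-/

open Function

section ParametricIntegral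

variable {E : Type*} [TopologicalSpace E] [T2Space E] [MeasurableSpace E]
  [OpensMeasurableSpace E] {μ : Measure E} [IsFiniteMeasureOnCompacts μ]

theorem hasDerivAt_integral_of_continuousOn_of_eq_zero_off {F F' : ℝ → E → ℝ} {s : Set ℝ}
    (hs : IsOpen s) {K : Set E} (hK : IsCompact K) (hF : ∀ τ ∈ s, Continuous (F τ))
    (hF' : ContinuousOn (uncurry F') (s ×ˢ univ))
    (hFF' : ∀ τ ∈ s, ∀ x, HasDerivAt (F · x) (F' τ x) τ)
    (hF0 : ∀ τ ∈ s, ∀ x ∉ K, F τ x = 0) {t : ℝ} (ht : t ∈ s) :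
    HasDerivAt (fun τ => ∫ x, F τ x ∂μ) (∫ x, F' t x ∂μ) t := by
  obtain ⟨δ, hδ, hδs⟩ := Metric.nhds_basis_closedBall.mem_iff.1 (hs.mem_nhds ht)
  obtain ⟨C, hC⟩ := ((isCompact_closedBall t δ).prod hK).exists_bound_of_continuousOn
    (hF'.mono (prod_mono hδs (subset_univ K)))
  have hF'0 : ∀ τ ∈ s, ∀ x ∉ K, F' τ x = 0 := fun τ hτ x hx =>
    (hFF' τ hτ x).unique <| (hasDerivAt_const τ (0 : ℝ)).congr_of_eventuallyEq <|
      Filter.eventually_of_mem (hs.mem_nhds hτ) fun σ hσ => hF0 σ hσ x hx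
  refine (hasDerivAt_integral_of_dominated_loc_of_deriv_le (Metric.ball_mem_nhds t hδ)
    (bound := K.indicator fun _ => C)
    (Filter.eventually_of_mem (hs.mem_nhds ht) fun τ hτ => (hF τ hτ).aestronglyMeasurable)
    ((hF t ht).integrable_of_hasCompactSupport (.intro hK (hF0 t ht)))
    (continuousOn_univ.1 (hF'.uncurry_left t ht)).aestronglyMeasurable
    (Filter.Eventually.of_forall fun x τ hτ => ?_)
    ((integrable_indicator_iff hK.measurableSet).2 (integrableOn_const hK.measure_lt_top.ne))
    (Filter.Eventually.of_forall fun x τ hτ =>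
      hFF' τ (hδs (Metric.ball_subset_closedBall hτ)) x)).2
  by_cases hx : x ∈ K
  · rw [indicator_of_mem hx]
    exact hC (τ, x) ⟨Metric.ball_subset_closedBall hτ, hx⟩
  · rw [indicator_of_notMem hx, hF'0 τ (hδs (Metric.ball_subset_closedBall hτ)) x hx, norm_zero]

end ParametricIntegral

section Slices

variable {E F : Type*} [NormedAddCommGroup E] [NormedSpace ℝ E] [NormedAddCommGroup F]
  [NormedSpace ℝ F]

theorem DifferentiableAt.hasDerivAt_slice_fst {G : ℝ × E → F} {τ : ℝ} {x : E}
    (hG : DifferentiableAt ℝ G (τ, x)) :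
    HasDerivAt (fun σ => G (σ, x)) (fderiv ℝ G (τ, x) (1, 0)) τ :=
  hG.hasFDerivAt.comp_hasDerivAt τ ((hasDerivAt_id τ).prodMk (hasDerivAt_const τ x))

theorem ContDiffAt.fderiv_fderiv_apply_comm {G : E → F} {p : E} (hG : ContDiffAt ℝ 2 G p)
    (v w : E) :
    fderiv ℝ (fun q => fderiv ℝ G q v) p w = fderiv ℝ (fun q => fderiv ℝ G q w) p v := by
  have hD : DifferentiableAt ℝ (fderiv ℝ G) p :=
    (hG.fderiv_right (m := 1) le_rfl).differentiableAt one_ne_zero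
  rw [fderiv_clm_apply hD (differentiableAt_const v),
    fderiv_clm_apply hD (differentiableAt_const w)]
  simpa using (hG.isSymmSndFDerivAt (by simp)).eq w v

end Slices

section EuclideanDerivatives

variable {n : ℕ}

theorem norm_gradient_sq_eq_sum_pd_sq (f : EuclideanSpace ℝ (Fin n) → ℝ)
    (x : EuclideanSpace ℝ (Fin n)) : ‖gradient f x‖ ^ 2 = ∑ i, pd i f x ^ 2 := by
  have hcoord : ∀ i, gradient f x i = pd i f x := fun i => by
    have h : inner ℝ (gradient f x) (EuclideanSpace.single i (1 : ℝ)) = pd i f x :=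
      InnerProductSpace.toDual_symm_apply
    rwa [EuclideanSpace.inner_single_right, one_mul, conj_trivial] at h
  rw [EuclideanSpace.norm_eq, Real.sq_sqrt (by positivity)]
  simp [hcoord, sq_abs]

theorem pd_eq_zero_of_notMem {K : Set (EuclideanSpace ℝ (Fin n))} (hK : IsClosed K)
    {f : EuclideanSpace ℝ (Fin n) → ℝ} (hf : ∀ x ∉ K, f x = 0) {x : EuclideanSpace ℝ (Fin n)}
    (hx : x ∉ K) (i : Fin n) : pd i f x = 0 := by
  have hf0 : f =ᶠ[nhds x] fun _ => 0 := Filter.eventually_of_mem (hK.isOpen_compl.mem_nhds hx) hf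
  rw [pd, hf0.fderiv_eq, fderiv_const_apply, zero_apply]

theorem ContDiff.contDiff_pd {k m : WithTop ℕ∞} {f : EuclideanSpace ℝ (Fin n) → ℝ}
    (hf : ContDiff ℝ k f) (hmk : m + 1 ≤ k) (i : Fin n) : ContDiff ℝ m (pd i f) :=
  (hf.fderiv_right hmk).clm_apply contDiff_const

theorem ContDiff.continuous_pd {k : WithTop ℕ∞} {f : EuclideanSpace ℝ (Fin n) → ℝ}
    (hf : ContDiff ℝ k f) (hk : k ≠ 0) (i : Fin n) : Continuous (pd i f) :=
  (hf.continuous_fderiv hk).clm_apply continuous_const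

theorem ContDiff.continuous_lap {f : EuclideanSpace ℝ (Fin n) → ℝ} (hf : ContDiff ℝ 2 f) :
    Continuous (lap f) :=
  continuous_finsetSum _ fun i _ => (hf.contDiff_pd (by norm_num) i).continuous_pd one_ne_zero i

theorem HasCompactSupport.pd {f : EuclideanSpace ℝ (Fin n) → ℝ} (hf : HasCompactSupport f)
    (i : Fin n) : HasCompactSupport (pd i f) :=
  hf.fderiv_apply (𝕜 := ℝ) _

theorem integral_mul_lap_eq_neg_integral_sum_pd_mul_pd {f g : EuclideanSpace ℝ (Fin n) → ℝ}
    (hf : ContDiff ℝ 1 f) (hg : ContDiff ℝ 2 g) (hfc : HasCompactSupport f) :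
    ∫ x, f x * lap g x = - ∫ x, ∑ i, pd i f x * pd i g x := by
  have hg' : ∀ i, ContDiff ℝ 1 (pd i g) := fun i => hg.contDiff_pd (by norm_num) i
  have hint : ∀ {h : EuclideanSpace ℝ (Fin n) → ℝ}, Continuous h → HasCompactSupport h →
      Integrable h := fun hc hs => hc.integrable_of_hasCompactSupport hs
  have hfΔg : ∀ i, Integrable fun x => f x * pd i (pd i g) x := fun i =>
    hint (hf.continuous.mul ((hg' i).continuous_pd one_ne_zero i)) hfc.mul_right
  have hDfDg : ∀ i, Integrable fun x => pd i f x * pd i g x := fun i =>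
    hint ((hf.continuous_pd one_ne_zero i).mul (hg' i).continuous) (hfc.pd i).mul_right
  have hparts : ∀ i, ∫ x, f x * pd i (pd i g) x = - ∫ x, pd i f x * pd i g x := fun i =>
    integral_mul_fderiv_eq_neg_fderiv_mul_of_integrable (hDfDg i) (hfΔg i)
      (hint (hf.continuous.mul (hg' i).continuous) hfc.mul_right)
      (fun x _ => hf.differentiable one_ne_zero x)
      (fun x _ => (hg' i).differentiable one_ne_zero x)
  simp only [lap, Finset.mul_sum]
  rw [integral_finsetSum _ fun i _ => hfΔg i, integral_finsetSum _ fun i _ => hDfDg i,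
    ← Finset.sum_neg_distrib]
  exact Finset.sum_congr rfl fun i _ => hparts i

theorem DifferentiableAt.pd_slice_snd {G : ℝ × EuclideanSpace ℝ (Fin n) → ℝ} {τ : ℝ}
    {x : EuclideanSpace ℝ (Fin n)} (hG : DifferentiableAt ℝ G (τ, x)) (i : Fin n) :
    pd i (fun y => G (τ, y)) x = fderiv ℝ G (τ, x) (0, EuclideanSpace.single i 1) := by
  have h : HasFDerivAt (fun y => G (τ, y))
      ((fderiv ℝ G (τ, x)).comp (ContinuousLinearMap.inr ℝ ℝ (EuclideanSpace ℝ (Fin n)))) x :=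
    hG.hasFDerivAt.comp x (hasFDerivAt_prodMk_right τ x)
  rw [pd, h.fderiv]
  rfl

theorem dt1_eq_zero_of_forall_eq_zero {u : ℝ → EuclideanSpace ℝ (Fin n) → ℝ} {s : Set ℝ}
    (hs : IsOpen s) {x : EuclideanSpace ℝ (Fin n)} (h : ∀ τ ∈ s, u τ x = 0) {τ : ℝ}
    (hτ : τ ∈ s) : dt1 u τ x = 0 := by
  have h0 : (u · x) =ᶠ[nhds τ] fun _ => 0 := Filter.eventually_of_mem (hs.mem_nhds hτ) h
  rw [dt1, h0.deriv_eq, deriv_const]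

theorem contDiff_slice {u : ℝ → EuclideanSpace ℝ (Fin n) → ℝ} {s : Set ℝ}
    (hu : ContDiffOn ℝ 2 (uncurry u) (s ×ˢ univ)) {τ : ℝ} (hτ : τ ∈ s) : ContDiff ℝ 2 (u τ) :=
  hu.comp_contDiff (contDiff_prodMk_right τ) fun x => ⟨hτ, mem_univ x⟩

end EuclideanDerivatives

section SpaceTimeRegularity

variable {n : ℕ} {u : ℝ → EuclideanSpace ℝ (Fin n) → ℝ} {s : Set ℝ} (hs : IsOpen s)
  (hu : ContDiffOn ℝ 2 (uncurry u) (s ×ˢ univ))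
include hs hu

theorem contDiffAt_uncurry {τ : ℝ} (hτ : τ ∈ s) (x : EuclideanSpace ℝ (Fin n)) :
    ContDiffAt ℝ 2 (uncurry u) (τ, x) :=
  hu.contDiffAt ((hs.prod isOpen_univ).mem_nhds ⟨hτ, mem_univ x⟩)

theorem contDiffOn_fderiv_uncurry_apply (v : ℝ × EuclideanSpace ℝ (Fin n)) :
    ContDiffOn ℝ 1 (fun p => fderiv ℝ (uncurry u) p v) (s ×ˢ univ) :=
  (hu.fderiv_of_isOpen (hs.prod isOpen_univ) (by norm_num)).clm_apply contDiffOn_const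

theorem differentiableAt_fderiv_uncurry_apply {τ : ℝ} (hτ : τ ∈ s) (x : EuclideanSpace ℝ (Fin n))
    (v : ℝ × EuclideanSpace ℝ (Fin n)) :
    DifferentiableAt ℝ (fun p => fderiv ℝ (uncurry u) p v) (τ, x) :=
  ((contDiffOn_fderiv_uncurry_apply hs hu v).differentiableOn one_ne_zero _
    ⟨hτ, mem_univ x⟩).differentiableAt ((hs.prod isOpen_univ).mem_nhds ⟨hτ, mem_univ x⟩)

theorem hasDerivAt_dt1 {τ : ℝ} (hτ : τ ∈ s) (x : EuclideanSpace ℝ (Fin n)) :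
    HasDerivAt (u · x) (dt1 u τ x) τ :=
  ((contDiffAt_uncurry hs hu hτ x).differentiableAt two_ne_zero).hasDerivAt_slice_fst
    |>.differentiableAt.hasDerivAt

theorem dt1_eq_fderiv {τ : ℝ} (hτ : τ ∈ s) (x : EuclideanSpace ℝ (Fin n)) :
    dt1 u τ x = fderiv ℝ (uncurry u) (τ, x) (1, 0) :=
  ((contDiffAt_uncurry hs hu hτ x).differentiableAt two_ne_zero).hasDerivAt_slice_fst.deriv

theorem dt1_slice_eq_fderiv {τ : ℝ} (hτ : τ ∈ s) :
    dt1 u τ = fun y => fderiv ℝ (uncurry u) (τ, y) (1, 0) :=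
  funext (dt1_eq_fderiv hs hu hτ)

theorem hasDerivAt_dt1_fderiv {τ : ℝ} (hτ : τ ∈ s) (x : EuclideanSpace ℝ (Fin n)) :
    HasDerivAt (dt1 u · x)
      (fderiv ℝ (fun p => fderiv ℝ (uncurry u) p (1, 0)) (τ, x) (1, 0)) τ :=
  (differentiableAt_fderiv_uncurry_apply hs hu hτ x _).hasDerivAt_slice_fst.congr_of_eventuallyEq
    (Filter.eventually_of_mem (hs.mem_nhds hτ) fun _ hσ => dt1_eq_fderiv hs hu hσ x)

theorem hasDerivAt_dt2 {τ : ℝ} (hτ : τ ∈ s) (x : EuclideanSpace ℝ (Fin n)) :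
    HasDerivAt (dt1 u · x) (dt2 u τ x) τ :=
  (hasDerivAt_dt1_fderiv hs hu hτ x).differentiableAt.hasDerivAt

theorem pd_eq_fderiv {τ : ℝ} (hτ : τ ∈ s) (i : Fin n) (x : EuclideanSpace ℝ (Fin n)) :
    pd i (u τ) x = fderiv ℝ (uncurry u) (τ, x) (0, EuclideanSpace.single i 1) :=
  ((contDiffAt_uncurry hs hu hτ x).differentiableAt two_ne_zero).pd_slice_snd i

theorem pd_dt1_eq_fderiv {τ : ℝ} (hτ : τ ∈ s) (i : Fin n) (x : EuclideanSpace ℝ (Fin n)) :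
    pd i (dt1 u τ) x = fderiv ℝ (fun p => fderiv ℝ (uncurry u) p (1, 0)) (τ, x)
      (0, EuclideanSpace.single i 1) := by
  rw [dt1_slice_eq_fderiv hs hu hτ]
  exact (differentiableAt_fderiv_uncurry_apply hs hu hτ x _).pd_slice_snd i

theorem hasDerivAt_pd {τ : ℝ} (hτ : τ ∈ s) (i : Fin n) (x : EuclideanSpace ℝ (Fin n)) :
    HasDerivAt (fun σ => pd i (u σ) x) (pd i (dt1 u τ) x) τ := by
  rw [pd_dt1_eq_fderiv hs hu hτ, ← (contDiffAt_uncurry hs hu hτ x).fderiv_fderiv_apply_comm]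
  exact (differentiableAt_fderiv_uncurry_apply hs hu hτ x _).hasDerivAt_slice_fst
    |>.congr_of_eventuallyEq
      (Filter.eventually_of_mem (hs.mem_nhds hτ) fun _ hσ => pd_eq_fderiv hs hu hσ i x)

theorem contDiff_dt1_slice {τ : ℝ} (hτ : τ ∈ s) : ContDiff ℝ 1 (dt1 u τ) := by
  rw [dt1_slice_eq_fderiv hs hu hτ]
  exact (contDiffOn_fderiv_uncurry_apply hs hu _).comp_contDiff (contDiff_prodMk_right τ)
    fun x => ⟨hτ, mem_univ x⟩

theorem continuousOn_dt1 :
    ContinuousOn (fun p : ℝ × EuclideanSpace ℝ (Fin n) => dt1 u p.1 p.2) (s ×ˢ univ) :=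
  (contDiffOn_fderiv_uncurry_apply hs hu _).continuousOn.congr fun p hp =>
    dt1_eq_fderiv hs hu hp.1 p.2

theorem continuousOn_dt2 :
    ContinuousOn (fun p : ℝ × EuclideanSpace ℝ (Fin n) => dt2 u p.1 p.2) (s ×ˢ univ) :=
  (((contDiffOn_fderiv_uncurry_apply hs hu (1, 0)).continuousOn_fderiv_of_isOpen
    (hs.prod isOpen_univ) le_rfl).clm_apply (continuousOn_const (c := (1, 0)))).congr
    fun p hp => (hasDerivAt_dt2 hs hu hp.1 p.2).unique (hasDerivAt_dt1_fderiv hs hu hp.1 p.2)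

theorem continuousOn_pd (i : Fin n) :
    ContinuousOn (fun p : ℝ × EuclideanSpace ℝ (Fin n) => pd i (u p.1) p.2) (s ×ˢ univ) :=
  (contDiffOn_fderiv_uncurry_apply hs hu _).continuousOn.congr fun p hp =>
    pd_eq_fderiv hs hu hp.1 i p.2

theorem continuousOn_pd_dt1 (i : Fin n) :
    ContinuousOn (fun p : ℝ × EuclideanSpace ℝ (Fin n) => pd i (dt1 u p.1) p.2) (s ×ˢ univ) :=
  (((contDiffOn_fderiv_uncurry_apply hs hu (1, 0)).continuousOn_fderiv_of_isOpen
    (hs.prod isOpen_univ) le_rfl).clm_apply continuousOn_const).congr fun p hp =>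
    pd_dt1_eq_fderiv hs hu hp.1 i p.2

end SpaceTimeRegularity

section Energy

variable {n : ℕ} {u : ℝ → EuclideanSpace ℝ (Fin n) → ℝ} {s : Set ℝ}
  {b c : EuclideanSpace ℝ (Fin n) → ℝ}

noncomputable def energyDensity (b c : EuclideanSpace ℝ (Fin n) → ℝ)
    (u : ℝ → EuclideanSpace ℝ (Fin n) → ℝ) (τ : ℝ) (x : EuclideanSpace ℝ (Fin n)) : ℝ :=
  ∑ i, pd i (u τ) x ^ 2 + (c x ^ 2)⁻¹ * b x * u τ x ^ 2 + (c x ^ 2)⁻¹ * dt1 u τ x ^ 2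

noncomputable def energyDensityDeriv (b c : EuclideanSpace ℝ (Fin n) → ℝ)
    (u : ℝ → EuclideanSpace ℝ (Fin n) → ℝ) (τ : ℝ) (x : EuclideanSpace ℝ (Fin n)) : ℝ :=
  ∑ i, 2 * pd i (u τ) x * pd i (dt1 u τ) x + (c x ^ 2)⁻¹ * b x * (2 * u τ x * dt1 u τ x)
    + (c x ^ 2)⁻¹ * (2 * dt1 u τ x * dt2 u τ x)

theorem energyDensity_eq_zero {K : Set (EuclideanSpace ℝ (Fin n))} (hs : IsOpen s)
    (hK : IsClosed K) (hsupp : ∀ τ ∈ s, ∀ x ∉ K, u τ x = 0) {τ : ℝ} (hτ : τ ∈ s)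
    {x : EuclideanSpace ℝ (Fin n)} (hx : x ∉ K) : energyDensity b c u τ x = 0 := by
  simp [energyDensity, hsupp τ hτ x hx, pd_eq_zero_of_notMem hK (hsupp τ hτ) hx,
    dt1_eq_zero_of_forall_eq_zero hs (fun σ hσ => hsupp σ hσ x hx) hτ]

theorem energyDensityDeriv_eq_of_pde {a : EuclideanSpace ℝ (Fin n) → ℝ}
    {Φ : ℝ → EuclideanSpace ℝ (Fin n) → ℝ} {t : ℝ} {x : EuclideanSpace ℝ (Fin n)}
    (hcx : c x ≠ 0) (hPDE : dt2 u t x - c x ^ 2 * lap (u t) x + a x * dt1 u t x + b x * u t x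
      + tconv Φ (dt1 u) t x = 0) :
    energyDensityDeriv b c u t x
      = 2 * (dt1 u t x * lap (u t) x + ∑ i, pd i (dt1 u t) x * pd i (u t) x)
        - 2 * (a x * (c x ^ 2)⁻¹ * dt1 u t x ^ 2)
        - 2 * ((c x ^ 2)⁻¹ * tconv Φ (dt1 u) t x * dt1 u t x) := by
  have hsum : ∑ i, 2 * pd i (u t) x * pd i (dt1 u t) x
      = 2 * ∑ i, pd i (dt1 u t) x * pd i (u t) x := by
    rw [Finset.mul_sum]
    exact Finset.sum_congr rfl fun i _ => by ring
  rw [energyDensityDeriv, hsum]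
  linear_combination (2 * (c x ^ 2)⁻¹ * dt1 u t x) * hPDE
    + (2 * dt1 u t x * lap (u t) x) * inv_mul_cancel₀ (pow_ne_zero 2 hcx)

variable (hs : IsOpen s) (hu : ContDiffOn ℝ 2 (uncurry u) (s ×ˢ univ))
include hs hu

theorem hasDerivAt_energyDensity {τ : ℝ} (hτ : τ ∈ s) (x : EuclideanSpace ℝ (Fin n)) :
    HasDerivAt (energyDensity b c u · x) (energyDensityDeriv b c u τ x) τ := by
  have hgrad := HasDerivAt.fun_sum (u := Finset.univ) fun i _ =>
    (hasDerivAt_pd hs hu hτ i x).pow 2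
  have hpot := ((hasDerivAt_dt1 hs hu hτ x).pow 2).const_mul ((c x ^ 2)⁻¹ * b x)
  have hkin := ((hasDerivAt_dt2 hs hu hτ x).pow 2).const_mul (c x ^ 2)⁻¹
  exact ((hgrad.add hpot).add hkin).congr_deriv (by norm_num [energyDensityDeriv])

theorem continuous_energyDensity (hb : Continuous b) (hc : Continuous c) (hc0 : ∀ x, c x ≠ 0)
    {τ : ℝ} (hτ : τ ∈ s) : Continuous (energyDensity b c u τ) := by
  have hg := contDiff_slice hu hτ
  have hg' := hg.continuous
  have hgrad := fun i => hg.continuous_pd two_ne_zero i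
  have hw := (contDiff_dt1_slice hs hu hτ).continuous
  have hcinv : Continuous fun x => (c x ^ 2)⁻¹ := (hc.pow 2).inv₀ fun x => pow_ne_zero 2 (hc0 x)
  unfold energyDensity
  fun_prop

theorem continuousOn_energyDensityDeriv (hb : Continuous b) (hc : Continuous c)
    (hc0 : ∀ x, c x ≠ 0) : ContinuousOn (uncurry (energyDensityDeriv b c u)) (s ×ˢ univ) := by
  have hcinv : ContinuousOn (fun p : ℝ × EuclideanSpace ℝ (Fin n) => (c p.2 ^ 2)⁻¹)
      (s ×ˢ univ) :=
    (((hc.comp continuous_snd).pow 2).inv₀ fun p => pow_ne_zero 2 (hc0 p.2)).continuousOn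
  have hb' : ContinuousOn (fun p : ℝ × EuclideanSpace ℝ (Fin n) => b p.2) (s ×ˢ univ) :=
    (hb.comp continuous_snd).continuousOn
  have hg : ContinuousOn (fun p : ℝ × EuclideanSpace ℝ (Fin n) => u p.1 p.2) (s ×ˢ univ) :=
    hu.continuousOn
  have hw := continuousOn_dt1 hs hu
  have hgrad : ContinuousOn (fun p : ℝ × EuclideanSpace ℝ (Fin n) =>
      ∑ i, 2 * pd i (u p.1) p.2 * pd i (dt1 u p.1) p.2) (s ×ˢ univ) :=
    continuousOn_finsetSum _ fun i _ =>
      (continuousOn_const.mul (continuousOn_pd hs hu i)).mul (continuousOn_pd_dt1 hs hu i)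
  exact (hgrad.add ((hcinv.mul hb').mul ((continuousOn_const.mul hg).mul hw))).add
    (hcinv.mul ((continuousOn_const.mul hw).mul (continuousOn_dt2 hs hu)))

theorem hasDerivAt_integral_energyDensity (hb : Continuous b) (hc : Continuous c)
    (hc0 : ∀ x, c x ≠ 0) {K : Set (EuclideanSpace ℝ (Fin n))} (hK : IsCompact K)
    (hsupp : ∀ τ ∈ s, ∀ x ∉ K, u τ x = 0) {t : ℝ} (ht : t ∈ s) :
    HasDerivAt (fun τ => ∫ x, energyDensity b c u τ x) (∫ x, energyDensityDeriv b c u t x) t :=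
  hasDerivAt_integral_of_continuousOn_of_eq_zero_off hs hK
    (fun _ hτ => continuous_energyDensity hs hu hb hc hc0 hτ)
    (continuousOn_energyDensityDeriv hs hu hb hc hc0)
    (fun _ hτ x => hasDerivAt_energyDensity hs hu hτ x)
    (fun _ hτ _ hx => energyDensity_eq_zero hs hK.isClosed hsupp hτ hx) ht

theorem integral_energyDensityDeriv_eq {a : EuclideanSpace ℝ (Fin n) → ℝ}
    {Φ : ℝ → EuclideanSpace ℝ (Fin n) → ℝ} (ha : Continuous a) (hb : Continuous b)
    (hc : Continuous c) (hc0 : ∀ x, c x ≠ 0) {K : Set (EuclideanSpace ℝ (Fin n))}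
    (hK : IsCompact K) (hsupp : ∀ τ ∈ s, ∀ x ∉ K, u τ x = 0) {t : ℝ} (ht : t ∈ s)
    (hPDE : ∀ x, dt2 u t x - c x ^ 2 * lap (u t) x + a x * dt1 u t x + b x * u t x
      + tconv Φ (dt1 u) t x = 0) :
    ∫ x, energyDensityDeriv b c u t x
      = -2 * (∫ x, a x * (c x ^ 2)⁻¹ * dt1 u t x ^ 2)
        - 2 * (∫ x, (c x ^ 2)⁻¹ * tconv Φ (dt1 u) t x * dt1 u t x) := by
  have hint : ∀ {f : EuclideanSpace ℝ (Fin n) → ℝ}, Continuous f → (∀ x ∉ K, f x = 0) →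
      Integrable f := fun hf hf0 => hf.integrable_of_hasCompactSupport (.intro hK hf0)
  have hw := contDiff_dt1_slice hs hu ht
  have hg := contDiff_slice hu ht
  have hw0 : ∀ x ∉ K, dt1 u t x = 0 := fun x hx =>
    dt1_eq_zero_of_forall_eq_zero hs (fun σ hσ => hsupp σ hσ x hx) ht
  have hcinv : Continuous fun x => (c x ^ 2)⁻¹ := (hc.pow 2).inv₀ fun x => pow_ne_zero 2 (hc0 x)
  have hIlap : Integrable fun x => dt1 u t x * lap (u t) x :=
    hint (hw.continuous.mul hg.continuous_lap) fun x hx => by simp [hw0 x hx]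
  have hIgrad : Integrable fun x => ∑ i, pd i (dt1 u t) x * pd i (u t) x :=
    integrable_finsetSum _ fun i _ => hint ((hw.continuous_pd one_ne_zero i).mul
      (hg.continuous_pd two_ne_zero i)) fun x hx => by
        simp [pd_eq_zero_of_notMem hK.isClosed hw0 hx]
  have hIgreen : Integrable fun x =>
      2 * (dt1 u t x * lap (u t) x + ∑ i, pd i (dt1 u t) x * pd i (u t) x) :=
    (hIlap.add hIgrad).const_mul 2
  have hIdamp : Integrable fun x => 2 * (a x * (c x ^ 2)⁻¹ * dt1 u t x ^ 2) :=
    hint (continuous_const.mul ((ha.mul hcinv).mul (hw.continuous.pow 2))) fun x hx => by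
      simp [hw0 x hx]
  -- by the equation, `Φ ⋆ ∂ₜu` is a continuous function of `x`
  have hconv : ∀ x, tconv Φ (dt1 u) t x
      = c x ^ 2 * lap (u t) x - a x * dt1 u t x - b x * u t x - dt2 u t x := fun x => by
    linear_combination hPDE x
  have hImem : Integrable fun x => 2 * ((c x ^ 2)⁻¹ * tconv Φ (dt1 u) t x * dt1 u t x) := by
    simp_rw [hconv]
    have hq : Continuous (dt2 u t) :=
      continuousOn_univ.1 ((continuousOn_dt2 hs hu).uncurry_left t ht)
    exact hint (continuous_const.mul ((hcinv.mul ((((hc.pow 2).mul hg.continuous_lap).sub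
      (ha.mul hw.continuous)).sub (hb.mul hg.continuous) |>.sub hq)).mul hw.continuous))
      fun x hx => by simp [hw0 x hx]
  have hIdiff : Integrable fun x =>
      2 * (dt1 u t x * lap (u t) x + ∑ i, pd i (dt1 u t) x * pd i (u t) x)
        - 2 * (a x * (c x ^ 2)⁻¹ * dt1 u t x ^ 2) :=
    hIgreen.sub hIdamp
  simp_rw [energyDensityDeriv_eq_of_pde (hc0 _) (hPDE _)]
  rw [integral_sub hIdiff hImem, integral_sub hIgreen hIdamp, integral_const_mul,
    integral_const_mul, integral_const_mul, integral_add hIlap hIgrad,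
    integral_mul_lap_eq_neg_integral_sum_pd_mul_pd hw hg (.intro hK hw0)]
  ring

end Energy

theorem stmt2_general {n : ℕ} (T : ℝ)
    (a b c : EuclideanSpace ℝ (Fin n) → ℝ)
    (ha : Continuous a) (hb : Continuous b) (hc : Continuous c) (hcpos : ∀ x, 0 < c x)
    (Φ : ℝ → EuclideanSpace ℝ (Fin n) → ℝ)
    (u : ℝ → EuclideanSpace ℝ (Fin n) → ℝ)
    (hu : ContDiffOn ℝ 2 (fun p : ℝ × EuclideanSpace ℝ (Fin n) => u p.1 p.2)
      (Icc 0 T ×ˢ univ))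
    (K : Set (EuclideanSpace ℝ (Fin n))) (hK : IsCompact K)
    (hsupp : ∀ t ∈ Icc 0 T, ∀ x ∉ K, u t x = 0)
    (hPDE : ∀ t ∈ Ioo 0 T, ∀ x,
      dt2 u t x - (c x)^2 * lap (fun y => u t y) x + a x * dt1 u t x + b x * u t x
        + tconv Φ (dt1 u) t x = 0) :
    ∀ t ∈ Ioo 0 T,
      HasDerivAt (fun τ => ∫ x, (‖gradient (fun y => u τ y) x‖^2
            + ((c x)^2)⁻¹ * b x * (u τ x)^2 + ((c x)^2)⁻¹ * (dt1 u τ x)^2))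
        ((-2) * (∫ x, a x * ((c x)^2)⁻¹ * (dt1 u t x)^2)
          - 2 * (∫ x, ((c x)^2)⁻¹ * tconv Φ (dt1 u) t x * dt1 u t x)) t := by
  intro t ht
  have hu' : ContDiffOn ℝ 2 (uncurry u) (Ioo 0 T ×ˢ univ) :=
    hu.mono (prod_mono Ioo_subset_Icc_self subset_rfl)
  have hsupp' : ∀ τ ∈ Ioo 0 T, ∀ x ∉ K, u τ x = 0 := fun τ hτ =>
    hsupp τ (Ioo_subset_Icc_self hτ)
  have hc0 : ∀ x, c x ≠ 0 := fun x => (hcpos x).ne'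
  have henergy : (fun τ => ∫ x, (‖gradient (fun y => u τ y) x‖^2
      + ((c x)^2)⁻¹ * b x * (u τ x)^2 + ((c x)^2)⁻¹ * (dt1 u τ x)^2))
      = fun τ => ∫ x, energyDensity b c u τ x := by
    simp_rw [norm_gradient_sq_eq_sum_pd_sq]
    rfl
  rw [henergy, ← integral_energyDensityDeriv_eq isOpen_Ioo hu' ha hb hc hc0 hK hsupp' ht
    (hPDE t ht)]
  exact hasDerivAt_integral_energyDensity isOpen_Ioo hu' hb hc hc0 hK hsupp' ht

/-- Energy dissipation identity: for a compactly supported (in space) solution of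
`∂ₜ²u − c²Δu + a∂ₜu + bu + Φ ⋆ ∂ₜu = 0`, the energy
`E(t) = ∫ (|∇ₓu|² + c⁻²b|u|² + c⁻²|∂ₜu|²) dx` is differentiable on `(0,T)` with
`E′(t) = −2∫ a c⁻² |∂ₜu|² dx − 2∫ c⁻² (Φ ⋆ ∂ₜu) ∂ₜu dx`. -/
theorem stmt2 {n : ℕ} (T : ℝ) (hT : 0 < T)
    (a b c : EuclideanSpace ℝ (Fin n) → ℝ)
    (ha : Continuous a) (hb : Continuous b) (hc : Continuous c) (hcpos : ∀ x, 0 < c x)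
    (Φ : ℝ → EuclideanSpace ℝ (Fin n) → ℝ)
    (hΦ : ContinuousOn (fun p : ℝ × EuclideanSpace ℝ (Fin n) => Φ p.1 p.2)
      (Icc 0 T ×ˢ univ))
    (u : ℝ → EuclideanSpace ℝ (Fin n) → ℝ)
    (hu : ContDiffOn ℝ 2 (fun p : ℝ × EuclideanSpace ℝ (Fin n) => u p.1 p.2)
      (Icc 0 T ×ˢ univ))
    (K : Set (EuclideanSpace ℝ (Fin n))) (hK : IsCompact K)
    (hsupp : ∀ t ∈ Icc 0 T, ∀ x ∉ K, u t x = 0)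
    (hPDE : ∀ t ∈ Ioo 0 T, ∀ x,
      dt2 u t x - (c x)^2 * lap (fun y => u t y) x + a x * dt1 u t x + b x * u t x
        + tconv Φ (dt1 u) t x = 0) :
    ∀ t ∈ Ioo 0 T,
      HasDerivAt (fun τ => ∫ x, (‖gradient (fun y => u τ y) x‖^2
            + ((c x)^2)⁻¹ * b x * (u τ x)^2 + ((c x)^2)⁻¹ * (dt1 u τ x)^2))
        ((-2) * (∫ x, a x * ((c x)^2)⁻¹ * (dt1 u t x)^2)
          - 2 * (∫ x, ((c x)^2)⁻¹ * tconv Φ (dt1 u) t x * dt1 u t x)) t :=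
  stmt2_general T a b c ha hb hc hcpos Φ u hu K hK hsupp hPDE
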